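/- arXiv:1203.0216 — 2 statements merged into one kernel-verified Lean document; each statement's English description precedes it below -/
import Mathlib

section
/- Let E be a nonzero hermitian vector bundle over an arithmetic curve Spec O_K (or over ℚ̄). Then the set {μ̂(F̄) : F a nonzero submodule (subspace) of E} attains its maximum, and there exists a nonzero subbundle Ē_des of Ē of maximal slope containing every subbundle of Ē whose slope is maximal. -/
/-!
Adding the lines of a fixed basis one at a time shows that `deg` is bounded above, so the slopes
have a finite supremum `c`. The defect `c · rank W - deg W` is nonnegative and submodular. Let `r`
be the largest rank such that the defect takes arbitrarily small values on subspaces of rank `≥ r`.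
If the infimum `0` were not attained there, two distinct subspaces `W₁ ≠ W₂` of rank `r` with small
defect would give `W₁ ⊔ W₂`, of larger rank, with defect at most that of `W₁` plus that of `W₂`:
a contradiction. So the slope `c` is attained. The zeros of the defect are closed under `⊔`, by
submodularity again, and by noetherianity their supremum is one of them: the destabilizing subspace.
-/

open Module

section

variable {K E : Type*} [Field K] [AddCommGroup E] [Module K E]

lemma add_le_of_disjoint_of_submodular {deg : Submodule K E → ℝ} (hzero : deg ⊥ = 0)
    (hsub : ∀ A B : Submodule K E, deg A + deg B ≤ deg (A ⊓ B) + deg (A ⊔ B))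
    {A B : Submodule K E} (h : Disjoint A B) : deg A + deg B ≤ deg (A ⊔ B) := by
  simpa [h.eq_bot, hzero] using hsub A B

variable [FiniteDimensional K E]

lemma cast_finrank_pos {W : Submodule K E} (hW : W ≠ ⊥) : (0 : ℝ) < finrank K W := by
  exact_mod_cast Submodule.one_le_finrank_iff.2 hW

lemma bddAbove_range_of_submodular {deg : Submodule K E → ℝ} (hzero : deg ⊥ = 0)
    (hsub : ∀ A B : Submodule K E, deg A + deg B ≤ deg (A ⊓ B) + deg (A ⊔ B)) :
    BddAbove (Set.range deg) := by
  let b := Module.finBasis K E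
  set C := ∑ i, |deg (K ∙ b i)|
  have hC0 : 0 ≤ C := Finset.sum_nonneg fun i _ ↦ abs_nonneg _
  have hC : ∀ i, -deg (K ∙ b i) ≤ C := fun i ↦ (neg_le_abs _).trans
    (Finset.single_le_sum (f := fun i ↦ |deg (K ∙ b i)|) (fun _ _ ↦ abs_nonneg _)
      (Finset.mem_univ i))
  have hdeg_add : ∀ W : Submodule K E, deg W + finrank K W * C ≤ deg ⊤ + finrank K E * C := by
    intro W
    induction W using WellFoundedGT.induction with
    | _ W ih =>
    rcases eq_or_ne W ⊤ with rfl | hW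
    · simp
    obtain ⟨i, hi⟩ : ∃ i, b i ∉ W := by
      by_contra! h
      exact hW (eq_top_iff.2 (b.span_eq ▸ Submodule.span_le.2 (Set.range_subset_iff.2 h)))
    have hdisj : Disjoint W (K ∙ b i) := (Submodule.disjoint_span_singleton' (b.ne_zero i)).2 hi
    have hrank : finrank K ↥(W ⊔ K ∙ b i) = finrank K W + 1 := by
      have := Submodule.finrank_sup_add_finrank_inf_eq W (K ∙ b i)
      rwa [hdisj.eq_bot, finrank_bot, finrank_span_singleton (b.ne_zero i)] at this
    have hup := ih _ (left_lt_sup.2 fun h ↦ hi (h (Submodule.mem_span_singleton_self _)))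
    have hstep := add_le_of_disjoint_of_submodular hzero hsub hdisj
    push_cast [hrank] at hup
    linarith [hC i]
  refine ⟨deg ⊤ + finrank K E * C, ?_⟩
  rintro _ ⟨W, rfl⟩
  linarith [hdeg_add W, mul_nonneg (Nat.cast_nonneg (α := ℝ) (finrank K W)) hC0]

section Defect

variable (φ : Submodule K E → ℝ)

def HasSmallValuesFromRank (r : ℕ) : Prop :=
  ∀ δ > 0, ∃ W : Submodule K E, r ≤ finrank K W ∧ φ W < δ

variable {φ}

theorem exists_eq_zero_of_hasSmallValuesFromRank (hφ : ∀ W, 0 ≤ φ W)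
    (hsub : ∀ A B, φ (A ⊔ B) + φ (A ⊓ B) ≤ φ A + φ B) {r : ℕ}
    (hr : HasSmallValuesFromRank φ r) (hr' : ¬HasSmallValuesFromRank φ (r + 1)) :
    ∃ W : Submodule K E, r ≤ finrank K W ∧ φ W = 0 := by
  obtain ⟨δ, hδ, hgap⟩ : ∃ δ > 0, ∀ W : Submodule K E, r + 1 ≤ finrank K W → δ ≤ φ W := by
    simpa [HasSmallValuesFromRank] using hr'
  have hrank : ∀ W : Submodule K E, r ≤ finrank K W → φ W < δ → finrank K W = r :=
    fun W hW hφW ↦ by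
      by_contra hne
      exact (hgap W (by omega)).not_gt hφW
  by_contra! hpos
  obtain ⟨W₁, hr₁, hW₁⟩ := hr (δ / 2) (half_pos hδ)
  obtain ⟨W₂, hr₂, hW₂⟩ := hr (φ W₁) ((hφ W₁).lt_of_ne' (hpos W₁ hr₁))
  have hW₁r := hrank W₁ hr₁ (by linarith)
  have hW₂r := hrank W₂ hr₂ (by linarith)
  have hW₂W₁ : ¬W₂ ≤ W₁ := fun h ↦ by
    rw [Submodule.eq_of_le_of_finrank_eq h (hW₂r.trans hW₁r.symm)] at hW₂
    exact lt_irrefl _ hW₂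
  have hsup : r + 1 ≤ finrank K ↥(W₁ ⊔ W₂) := by
    have := Submodule.finrank_lt_finrank_of_lt (left_lt_sup.2 hW₂W₁)
    omega
  linarith [hgap _ hsup, hsub W₁ W₂, hφ (W₁ ⊓ W₂)]

theorem exists_ne_bot_eq_zero_of_hasSmallValuesFromRank_one (hφ : ∀ W, 0 ≤ φ W)
    (hsub : ∀ A B, φ (A ⊔ B) + φ (A ⊓ B) ≤ φ A + φ B) (h1 : HasSmallValuesFromRank φ 1) :
    ∃ W ≠ ⊥, φ W = 0 := by
  classical
  have hle : ∀ {r}, HasSmallValuesFromRank φ r → r ≤ finrank K E := fun h ↦ by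
    obtain ⟨W, hW, -⟩ := h 1 one_pos
    exact hW.trans W.finrank_le
  set r := Nat.findGreatest (HasSmallValuesFromRank φ) (finrank K E)
  have hr : HasSmallValuesFromRank φ r := Nat.findGreatest_spec (hle h1) h1
  have hr' : ¬HasSmallValuesFromRank φ (r + 1) := fun h ↦
    Nat.findGreatest_is_greatest (Nat.lt_succ_self r) (hle h) h
  obtain ⟨W, hW, hφW⟩ := exists_eq_zero_of_hasSmallValuesFromRank hφ hsub hr hr'
  exact ⟨W, Submodule.one_le_finrank_iff.1 ((Nat.le_findGreatest (hle h1) h1).trans hW), hφW⟩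

end Defect

noncomputable def defect (deg : Submodule K E → ℝ) (c : ℝ) (W : Submodule K E) : ℝ :=
  c * finrank K W - deg W

lemma defect_sup_add_defect_inf_le {deg : Submodule K E → ℝ}
    (hsub : ∀ A B : Submodule K E, deg A + deg B ≤ deg (A ⊓ B) + deg (A ⊔ B)) (c : ℝ)
    (A B : Submodule K E) :
    defect deg c (A ⊔ B) + defect deg c (A ⊓ B) ≤ defect deg c A + defect deg c B := by
  have hrank : (finrank K ↥(A ⊔ B) : ℝ) + finrank K ↥(A ⊓ B) = finrank K A + finrank K B := by
    exact_mod_cast Submodule.finrank_sup_add_finrank_inf_eq A B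
  simp only [defect]
  linarith [hsub A B, congrArg (c * ·) hrank]

lemma exists_deg_eq_mul_finrank_of_submodular [Nontrivial E] {deg : Submodule K E → ℝ}
    (hzero : deg ⊥ = 0)
    (hsub : ∀ A B : Submodule K E, deg A + deg B ≤ deg (A ⊓ B) + deg (A ⊔ B)) :
    ∃ c : ℝ, (∀ W, deg W ≤ c * finrank K W) ∧ ∃ W ≠ ⊥, deg W = c * finrank K W := by
  set S := {x : ℝ | ∃ W : Submodule K E, W ≠ ⊥ ∧ x = deg W / finrank K W}
  obtain ⟨B, hB⟩ := bddAbove_range_of_submodular hzero hsub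
  have hbdd : BddAbove S := by
    refine ⟨max B 0, ?_⟩
    rintro _ ⟨W, hW, rfl⟩
    have h1 : (1 : ℝ) ≤ finrank K W := by exact_mod_cast Submodule.one_le_finrank_iff.2 hW
    rw [div_le_iff₀ (cast_finrank_pos hW)]
    calc deg W ≤ max B 0 := (hB ⟨W, rfl⟩).trans (le_max_left _ _)
      _ ≤ max B 0 * finrank K W := le_mul_of_one_le_right (le_max_right _ _) h1
  have hne : S.Nonempty := ⟨_, ⊤, top_ne_bot, rfl⟩
  set c := sSup S
  have hc : ∀ W, deg W ≤ c * finrank K W := by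
    intro W
    rcases eq_or_ne W ⊥ with rfl | hW
    · simp [hzero]
    exact (div_le_iff₀ (cast_finrank_pos hW)).1 (le_csSup hbdd ⟨W, hW, rfl⟩)
  have hsmall : HasSmallValuesFromRank (defect deg c) 1 := by
    intro δ hδ
    have hn : (0 : ℝ) < finrank K E := by exact_mod_cast finrank_pos
    obtain ⟨_, ⟨W, hW, rfl⟩, hlt⟩ :=
      exists_lt_of_lt_csSup hne (show c - δ / finrank K E < c by linarith [div_pos hδ hn])
    have hr := cast_finrank_pos hW
    have hrn : (finrank K W : ℝ) ≤ finrank K E := by exact_mod_cast W.finrank_le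
    rw [lt_div_iff₀ hr] at hlt
    refine ⟨W, Submodule.one_le_finrank_iff.2 hW, ?_⟩
    calc defect deg c W < δ / finrank K E * finrank K W := by simp only [defect]; linarith
      _ ≤ δ := by rw [div_mul_eq_mul_div, div_le_iff₀ hn]; gcongr
  obtain ⟨W, hW, hdW⟩ := exists_ne_bot_eq_zero_of_hasSmallValuesFromRank_one
    (fun W ↦ sub_nonneg.2 (hc W)) (defect_sup_add_defect_inf_le hsub c) hsmall
  exact ⟨c, hc, W, hW, (sub_eq_zero.1 hdW).symm⟩

lemma supClosed_setOf_deg_eq_mul_finrank {deg : Submodule K E → ℝ}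
    (hsub : ∀ A B : Submodule K E, deg A + deg B ≤ deg (A ⊓ B) + deg (A ⊔ B)) {c : ℝ}
    (hc : ∀ W, deg W ≤ c * finrank K W) :
    SupClosed {W : Submodule K E | deg W = c * finrank K W} := by
  intro A hA B hB
  have hnonneg : ∀ W, 0 ≤ defect deg c W := fun W ↦ sub_nonneg.2 (hc W)
  have h := defect_sup_add_defect_inf_le hsub c A B
  simp only [Set.mem_ofPred_eq, defect] at hA hB h hnonneg ⊢
  linarith [hnonneg (A ⊔ B), hnonneg (A ⊓ B)]

end

/-- Abstract form of the existence of the destabilizing subbundle: on a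
nonzero finite-dimensional vector space, any degree function on the lattice of
subspaces with `deg ⊥ = 0` satisfying the submodularity inequality
`deg F₁ + deg F₂ ≤ deg (F₁ ⊓ F₂) + deg (F₁ ⊔ F₂)` admits a nonzero subspace of
maximal slope (`slope F = deg F / rank F`) containing every subspace of
maximal slope; in particular the set of slopes attains its maximum. -/
theorem stmt14 {K E : Type*} [Field K] [AddCommGroup E] [Module K E]
    [FiniteDimensional K E] [Nontrivial E]
    (deg : Submodule K E → ℝ) (hzero : deg ⊥ = 0)
    (hsub : ∀ A B : Submodule K E, deg A + deg B ≤ deg (A ⊓ B) + deg (A ⊔ B)) :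
    ∃ D : Submodule K E, D ≠ ⊥ ∧
      IsGreatest {x : ℝ | ∃ W : Submodule K E, W ≠ ⊥ ∧
          x = deg W / (Module.finrank K W : ℝ)}
        (deg D / (Module.finrank K D : ℝ)) ∧
      ∀ W : Submodule K E, W ≠ ⊥ →
        deg W / (Module.finrank K W : ℝ) = deg D / (Module.finrank K D : ℝ) → W ≤ D := by
  obtain ⟨c, hc, W₀, hW₀, hdegW₀⟩ := exists_deg_eq_mul_finrank_of_submodular hzero hsub
  set F := {W : Submodule K E | deg W = c * finrank K W}
  have hD : sSup F ∈ F := CompleteLattice.WellFoundedGT.isSupClosedCompact _ inferInstance F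
    ⟨W₀, hdegW₀⟩ (supClosed_setOf_deg_eq_mul_finrank hsub hc)
  have hDne : sSup F ≠ ⊥ := ne_bot_of_le_ne_bot hW₀ (le_sSup hdegW₀)
  have hslopeD : deg (sSup F) / finrank K ↥(sSup F) = c := by
    rw [hD, mul_div_cancel_right₀ _ (cast_finrank_pos hDne).ne']
  refine ⟨sSup F, hDne, ⟨⟨_, hDne, rfl⟩, ?_⟩, fun W hW hWD ↦ le_sSup ?_⟩
  · rintro _ ⟨W, hW, rfl⟩
    rw [hslopeD, div_le_iff₀ (cast_finrank_pos hW)]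
    exact hc W
  · rw [hslopeD, div_eq_iff (cast_finrank_pos hW).ne'] at hWD
    exact hWD
end

section
/- Let Ē be a hermitian vector bundle over ℚ̄ and M a nonzero subspace of E of rank r with E/M ≠ 0. Then μ̂_max(Ē/M̄) ≤ (r+1) μ̂_max(Ē) − r μ̂(M̄). -/
/-! Write `n = rank G` and `k = n - r ≥ 1`. The slope bounds `deg G ≤ n μmax` and
`deg M ≤ r μmax` give
`(n μmax - deg M) - k ((r + 1) μmax - deg M) = -(k - 1) (r μmax - deg M) ≤ 0`,
which is the claim after dividing by `k`. -/

lemma div_sub_le_of_le_mul {μ dM dG r n : ℝ} (hM : dM ≤ r * μ) (hG : dG ≤ n * μ)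
    (hrn : r + 1 ≤ n) :
    (dG - dM) / (n - r) ≤ (r + 1) * μ - dM := by
  rw [div_le_iff₀ (by linarith)]
  nlinarith [mul_nonneg (sub_nonneg.mpr hrn) (sub_nonneg.mpr hM)]

lemma deg_le_finrank_mul_of_mem_upperBounds {K E : Type*} [Field K] [AddCommGroup E]
    [Module K E] [FiniteDimensional K E] {deg : Submodule K E → ℝ} {μ : ℝ}
    (hμ : μ ∈ upperBounds {x : ℝ | ∃ W : Submodule K E, W ≠ ⊥ ∧
      x = deg W / (Module.finrank K W : ℝ)})
    {W : Submodule K E} (hW : W ≠ ⊥) :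
    deg W ≤ Module.finrank K W * μ := by
  have hpos : (0 : ℝ) < Module.finrank K W :=
    Nat.cast_pos.mpr (Nat.pos_of_ne_zero fun h => hW (Submodule.finrank_eq_zero.mp h))
  rw [← div_le_iff₀' hpos]
  exact hμ ⟨W, hW, rfl⟩

/-- A subspace of `E/M` is `F/M` with `M ≤ F`, of degree `deg F - deg M` and rank
`rank F - rank M`; it is nonzero exactly when `M < F`. -/
theorem stmt15_general {K E : Type*} [Field K] [AddCommGroup E] [Module K E]
    [FiniteDimensional K E]
    (deg : Submodule K E → ℝ)
    (M : Submodule K E) (hM : M ≠ ⊥)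
    (r : ℕ) (hr : r = Module.finrank K M)
    (μmax : ℝ)
    (hμ : IsGreatest {x : ℝ | ∃ W : Submodule K E, W ≠ ⊥ ∧
      x = deg W / (Module.finrank K W : ℝ)} μmax) :
    ∀ G : Submodule K E, M < G →
      (deg G - deg M) / ((Module.finrank K G : ℝ) - (Module.finrank K M : ℝ)) ≤
        ((r : ℝ) + 1) * μmax - (r : ℝ) * (deg M / (r : ℝ)) := by
  intro G hG
  subst hr
  have hMμ := deg_le_finrank_mul_of_mem_upperBounds hμ.2 hM
  have hGμ := deg_le_finrank_mul_of_mem_upperBounds hμ.2 (bot_le.trans_lt hG).ne'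
  have hrn : (Module.finrank K M : ℝ) + 1 ≤ Module.finrank K G := by
    exact_mod_cast Submodule.finrank_lt_finrank_of_lt hG
  have hr0 : (Module.finrank K M : ℝ) ≠ 0 :=
    Nat.cast_ne_zero.mpr fun h => hM (Submodule.finrank_eq_zero.mp h)
  rw [mul_div_cancel₀ _ hr0]
  exact div_sub_le_of_le_mul hMμ hGμ hrn

/-- Abstract form, for a degree function on subspaces: if `M` is a nonzero
proper subspace of rank `r` and `μmax` is the maximal slope
(`slope F = deg F / rank F` over nonzero subspaces), then the maximal slope of
the quotient satisfies `μ̂_max(E/M) ≤ (r+1) μmax − r μ(M)`, i.e. for every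
subspace `F` with `M ⊊ F` (so that `F/M` is a nonzero subspace of `E/M`, of
degree `deg F − deg M`), one has
`(deg F − deg M)/(rank F − rank M) ≤ (r+1) μmax − r (deg M / r)`. -/
theorem stmt15 {K E : Type*} [Field K] [AddCommGroup E] [Module K E]
    [FiniteDimensional K E]
    (deg : Submodule K E → ℝ) (hzero : deg ⊥ = 0)
    (hsub : ∀ A B : Submodule K E, deg A + deg B ≤ deg (A ⊓ B) + deg (A ⊔ B))
    (M : Submodule K E) (hM : M ≠ ⊥) (hMtop : M ≠ ⊤)
    (r : ℕ) (hr : r = Module.finrank K M)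
    (μmax : ℝ)
    (hμ : IsGreatest {x : ℝ | ∃ W : Submodule K E, W ≠ ⊥ ∧
      x = deg W / (Module.finrank K W : ℝ)} μmax) :
    ∀ G : Submodule K E, M < G →
      (deg G - deg M) / ((Module.finrank K G : ℝ) - (Module.finrank K M : ℝ)) ≤
        ((r : ℝ) + 1) * μmax - (r : ℝ) * (deg M / (r : ℝ)) :=
  stmt15_general deg M hM r hr μmax hμ
end
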